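/- Let k be a field, n ≥ 1, and let A ∈ Mat_n(k) be a matrix of rank r. Let X = (x_{ij}) be the n×n matrix of indeterminates and consider the polynomial det(A + X) ∈ k[x_{11}, …, x_{nn}]. Then the minimum total degree of a monomial occurring in det(A + X) with nonzero coefficient equals n − r. (Equivalently: the order of vanishing at A of the determinant function on the space of n×n matrices equals n − rank(A).) -/

import Mathlib

/-!
By the Leibniz formula every monomial of `det (A + X)` has the form `∏_{j ∈ S} x_{p j, j}`, and its
coefficient is the determinant of `A` with each column `j ∈ S` replaced by the unit vector
`e_{p j}`. That matrix has rank at most `|S| + rank A`, so a nonzero coefficient forces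
`|S| ≥ n - rank A`. Conversely, while `rank A < n` some column lies in the span of the others and
some unit vector lies outside the column space; swapping the one for the other raises the rank by
one, so `n - rank A` such swaps give a nonzero coefficient of degree `n - rank A`.
-/

namespace Stmt11

open MvPolynomial

noncomputable def ord {σ : Type*} {k : Type*} [CommSemiring k] (P : MvPolynomial σ k) : ℕ :=
  sInf ((fun s : σ →₀ ℕ => s.sum fun _ e => e) '' (P.support : Set (σ →₀ ℕ)))

theorem ord_eq_of_mem_support {σ k : Type*} [CommSemiring k] {P : MvPolynomial σ k} {d : ℕ}
    (hd : ∃ μ ∈ P.support, μ.degree = d) (hle : ∀ μ ∈ P.support, d ≤ μ.degree) : ord P = d := by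
  obtain ⟨μ, hμ, rfl⟩ := hd
  refine le_antisymm (Nat.sInf_le ⟨μ, hμ, rfl⟩) (le_csInf ⟨_, μ, hμ, rfl⟩ ?_)
  rintro _ ⟨ν, hν, rfl⟩
  exact hle ν hν

open Finset Matrix Equiv Submodule

section Monomials

variable {m n : Type*}

noncomputable def colMonomial (S : Finset n) (p : n → m) : m × n →₀ ℕ :=
  ∑ j ∈ S, Finsupp.single (p j, j) 1

theorem degree_colMonomial (S : Finset n) (p : n → m) : (colMonomial S p).degree = #S := by
  simp [colMonomial]

variable [DecidableEq m] [DecidableEq n]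

theorem colMonomial_apply (S : Finset n) (p : n → m) (i : m) (j : n) :
    colMonomial S p (i, j) = if j ∈ S ∧ i = p j then 1 else 0 := by
  have hoff : ∀ x ≠ j, Finsupp.single (p x, x) 1 (i, j) = 0 := fun x hx => by
    simp [hx]
  rw [colMonomial, Finsupp.finsetSum_apply]
  by_cases hj : j ∈ S
  · rw [sum_eq_single_of_mem j hj fun x _ => hoff x]
    simp [hj, Finsupp.single_apply, eq_comm]
  · rw [if_neg (by tauto)]
    exact sum_eq_zero fun x hx => hoff x (by rintro rfl; exact hj hx)

theorem colMonomial_eq_colMonomial_iff {S T : Finset n} {p q : n → m} :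
    colMonomial S p = colMonomial T q ↔ S = T ∧ ∀ j ∈ S, p j = q j := by
  constructor
  · intro h
    have hS : ∀ j ∈ S, j ∈ T ∧ p j = q j := fun j hj => by
      simpa [colMonomial_apply, hj] using congr($h (p j, j))
    have hT : ∀ j ∈ T, j ∈ S ∧ q j = p j := fun j hj => by
      simpa [colMonomial_apply, hj] using congr($h (q j, j))
    exact ⟨Finset.ext fun j => ⟨fun hj => (hS j hj).1, fun hj => (hT j hj).1⟩,
      fun j hj => (hS j hj).2⟩
  · rintro ⟨rfl, h⟩
    exact Finset.sum_congr rfl fun j hj => by rw [h j hj]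

end Monomials

section ReplaceCols

variable {m n R : Type*} [DecidableEq n]

theorem col_updateCol (A : Matrix m n R) (j : n) (v : m → R) :
    (A.updateCol j v).col = Function.update A.col j v := by
  ext b a
  by_cases hb : b = j
  · subst hb; simp [col_apply]
  · simp [col_apply, hb]

variable [DecidableEq m] [Zero R] [One R]

def replaceCols (A : Matrix m n R) (S : Finset n) (p : n → m) : Matrix m n R :=
  of fun i j => if j ∈ S then (Pi.single (p j) 1 : m → R) i else A i j

theorem replaceCols_apply (A : Matrix m n R) (S : Finset n) (p : n → m) (i : m) (j : n) :
    replaceCols A S p i j = if j ∈ S then (Pi.single (p j) 1 : m → R) i else A i j :=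
  rfl

theorem replaceCols_empty (A : Matrix m n R) (p : n → m) : replaceCols A ∅ p = A :=
  rfl

theorem replaceCols_updateCol (A : Matrix m n R) (S : Finset n) (p : n → m) (j : n) (c : m) :
    replaceCols (A.updateCol j (Pi.single c 1)) S p
      = replaceCols A (insert j S) fun i => if i ∈ S then p i else c := by
  ext a b
  by_cases hb : b ∈ S
  · simp [replaceCols_apply, hb]
  · by_cases hbj : b = j
    · subst hbj
      simp [replaceCols_apply, hb]
    · simp [replaceCols_apply, hb, hbj]

end ReplaceCols

section Determinant

variable {ι R : Type*} [Fintype ι] [DecidableEq ι] [CommRing R]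

theorem det_replaceCols (A : Matrix ι ι R) (S : Finset ι) (p : ι → ι) :
    (replaceCols A S p).det = ∑ σ : Perm ι,
      if ∀ j ∈ S, σ j = p j then (Perm.sign σ : R) * ∏ j ∈ Sᶜ, A (σ j) j else 0 := by
  simp only [det_apply', replaceCols_apply]
  refine sum_congr rfl fun σ _ => ?_
  rw [prod_ite, filter_mem_eq_inter, univ_inter, filter_notMem_eq_sdiff, ← compl_eq_univ_sdiff]
  simp only [Pi.single_apply, prod_boole]
  split_ifs <;> simp

noncomputable def detAddX (A : Matrix ι ι R) : MvPolynomial (ι × ι) R :=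
  det (of fun i j => C (A i j) + X (i, j))

theorem detAddX_eq_sum (A : Matrix ι ι R) :
    detAddX A = ∑ σ : Perm ι, ∑ S ∈ univ.powerset,
      monomial (colMonomial S σ) ((Perm.sign σ : R) * ∏ j ∈ Sᶜ, A (σ j) j) := by
  simp only [detAddX, det_apply', of_apply, add_comm (C _), prod_add, mul_sum,
    ← compl_eq_univ_sdiff]
  refine sum_congr rfl fun σ _ => sum_congr rfl fun S _ => ?_
  rw [colMonomial, monomial_sum_index, map_mul, ← map_prod, map_intCast]
  simp only [X]
  ring

theorem coeff_colMonomial_detAddX (A : Matrix ι ι R) (S : Finset ι) (p : ι → ι) :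
    coeff (colMonomial S p) (detAddX A) = (replaceCols A S p).det := by
  simp only [detAddX_eq_sum, coeff_sum, coeff_monomial, colMonomial_eq_colMonomial_iff, ite_and,
    sum_ite_eq', mem_powerset, subset_univ, if_true, det_replaceCols]

theorem exists_eq_colMonomial_of_mem_support {A : Matrix ι ι R} {μ : ι × ι →₀ ℕ}
    (hμ : μ ∈ (detAddX A).support) : ∃ S p, μ = colMonomial S p := by
  rw [detAddX_eq_sum] at hμ
  obtain ⟨σ, -, hσ⟩ := mem_biUnion.1 (support_sum hμ)
  obtain ⟨S, -, hS⟩ := mem_biUnion.1 (support_sum hσ)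
  exact ⟨S, σ, mem_singleton.1 (support_monomial_subset hS)⟩

end Determinant

section Rank

variable {m n K : Type*} [Fintype m] [Fintype n] [DecidableEq m] [DecidableEq n] [Field K]

theorem rank_replaceCols_le (A : Matrix m n K) (S : Finset n) (p : n → m) :
    (replaceCols A S p).rank ≤ #S + A.rank := by
  rw [rank_eq_finrank_span_cols, rank_eq_finrank_span_cols]
  have hle : span K (Set.range (replaceCols A S p).col)
      ≤ span K (Set.range fun j : S => (Pi.single (p j) 1 : m → K)) ⊔ span K (Set.range A.col) := by
    rw [span_le]
    rintro _ ⟨j, rfl⟩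
    by_cases hj : j ∈ S
    · refine mem_sup_left (subset_span ⟨⟨j, hj⟩, ?_⟩)
      ext i; simp [col_apply, replaceCols_apply, hj]
    · refine mem_sup_right (subset_span ⟨j, ?_⟩)
      ext i; simp [col_apply, replaceCols_apply, hj]
  calc _ ≤ _ := Submodule.finrank_mono hle
    _ ≤ _ := Submodule.finrank_add_le_finrank_add_finrank _ _
    _ ≤ #S + _ := by
      gcongr
      exact (finrank_range_le_card _).trans_eq (Fintype.card_coe S)

theorem exists_rank_lt_rank_updateCol (A : Matrix m n K) (hm : A.rank < Fintype.card m)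
    (hn : A.rank < Fintype.card n) : ∃ j c, A.rank < (A.updateCol j (Pi.single c 1)).rank := by
  simp only [rank_eq_finrank_span_cols] at hm hn ⊢
  obtain ⟨c, hc⟩ : ∃ c, (Pi.single c 1 : m → K) ∉ span K (Set.range A.col) := by
    by_contra! h
    have htop : span K (Set.range A.col) = ⊤ := by
      rw [eq_top_iff, ← (Pi.basisFun K m).span_eq, span_le]
      rintro _ ⟨c, rfl⟩
      simpa using h c
    rw [htop, finrank_top, Module.finrank_fintype_fun_eq_card] at hm
    exact hm.false
  obtain ⟨j, hj⟩ : ∃ j, A.col j ∈ span K (A.col '' (Set.univ \ {j})) := by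
    by_contra! h
    have := finrank_span_eq_card (linearIndependent_iff_notMem_span.2 h)
    omega
  refine ⟨j, c, Submodule.finrank_lt_finrank_of_lt (lt_of_le_of_ne ?_ fun hV => hc ?_)⟩
  -- the old column `j` is still in the new span, since it is spanned by the untouched columns
  · have hsub : A.col '' (Set.univ \ {j}) ⊆ Set.range (A.updateCol j (Pi.single c 1)).col := by
      rintro _ ⟨i, hi, rfl⟩
      exact ⟨i, by rw [col_updateCol, Function.update_of_ne (by simpa using hi)]⟩
    rw [span_le]
    rintro _ ⟨i, rfl⟩
    by_cases hij : i = j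
    · subst hij; exact span_mono hsub hj
    · exact subset_span ⟨i, by rw [col_updateCol, Function.update_of_ne hij]⟩
  · rw [hV]
    exact subset_span ⟨j, by rw [col_updateCol, Function.update_self]⟩

theorem det_ne_zero_of_rank_eq_card {A : Matrix n n K} (h : A.rank = Fintype.card n) :
    A.det ≠ 0 := by
  rw [rank_eq_finrank_span_cols] at h
  exact ((isUnit_iff_isUnit_det A).1 (linearIndependent_cols_iff_isUnit.1
    (linearIndependent_iff_card_eq_finrank_span.2 h.symm))).ne_zero

end Rank

section Order

variable {ι K : Type*} [Fintype ι] [DecidableEq ι] [Field K]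

theorem exists_det_replaceCols_ne_zero (A : Matrix ι ι K) :
    ∃ S p, #S + A.rank ≤ Fintype.card ι ∧ (replaceCols A S p).det ≠ 0 := by
  by_cases h : A.rank = Fintype.card ι
  · exact ⟨∅, id, by simp [h], by rw [replaceCols_empty]; exact det_ne_zero_of_rank_eq_card h⟩
  have hlt : A.rank < Fintype.card ι := lt_of_le_of_ne A.rank_le_card_width h
  obtain ⟨j, c, hj⟩ := exists_rank_lt_rank_updateCol A hlt hlt
  obtain ⟨S, p, hcard, hdet⟩ := exists_det_replaceCols_ne_zero (A.updateCol j (Pi.single c 1))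
  refine ⟨insert j S, _, ?_, replaceCols_updateCol A S p j c ▸ hdet⟩
  have := card_insert_le j S
  omega
termination_by Fintype.card ι - A.rank
decreasing_by
  have := (A.updateCol j (Pi.single c 1)).rank_le_card_width
  omega

theorem card_sub_rank_le_degree_of_mem_support {A : Matrix ι ι K} {μ : ι × ι →₀ ℕ}
    (hμ : μ ∈ (detAddX A).support) : Fintype.card ι - A.rank ≤ μ.degree := by
  obtain ⟨S, p, rfl⟩ := exists_eq_colMonomial_of_mem_support hμ
  have hdet : (replaceCols A S p).det ≠ 0 := by
    rwa [← coeff_colMonomial_detAddX, ← mem_support_iff]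
  have := rank_of_det_ne_zero hdet ▸ rank_replaceCols_le A S p
  rw [degree_colMonomial]
  omega

theorem ord_detAddX (A : Matrix ι ι K) : ord (detAddX A) = Fintype.card ι - A.rank := by
  obtain ⟨S, p, hcard, hdet⟩ := exists_det_replaceCols_ne_zero A
  have hμ : colMonomial S p ∈ (detAddX A).support := by
    rwa [mem_support_iff, coeff_colMonomial_detAddX]
  refine ord_eq_of_mem_support ⟨_, hμ, ?_⟩ fun μ => card_sub_rank_le_degree_of_mem_support
  have := card_sub_rank_le_degree_of_mem_support hμ
  rw [degree_colMonomial] at this ⊢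
  omega

end Order

theorem ord_det_eq (k : Type*) [Field k] (n : ℕ)
    (A : Matrix (Fin n) (Fin n) k) :
    ord (Matrix.det fun i j : Fin n =>
        (MvPolynomial.C (A i j) + MvPolynomial.X (i, j) :
          MvPolynomial (Fin n × Fin n) k))
      = n - A.rank := by
  exact (ord_detAddX A).trans (by rw [Fintype.card_fin])

end Stmt11
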